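/- arXiv:2006.06126 — 8 statements merged into one kernel-verified Lean document; each statement's English description precedes it below -/
import Mathlib

section
/- Let V ∈ ℍ^{d×n} be a quaternionic matrix with columns v_1, …, v_n, and set S := V·Vᴴ (frame operator) and G := Vᴴ·V (Gramian). Then trace(S^k) = trace(G^k) for every k ≥ 1; in particular trace(S) = ∑_j ‖v_j‖² and trace(S²) = ∑_j ∑_k |⟨v_j, v_k⟩|². -/
/-!
Over `ℍ` the trace is not cyclic, but its real part is, since `re (p q) = re (q p)`.
Powers of `V Vᴴ` and `Vᴴ V` are Hermitian, so their traces are real, and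
`(V Vᴴ)^(k+1) = V · (Vᴴ V)^k Vᴴ` then gives equal traces after cycling `V` to the back.
-/

open Quaternion Matrix BigOperators

noncomputable def qip {d : ℕ} (v w : Fin d → ℍ[ℝ]) : ℍ[ℝ] :=
  ∑ i, star (w i) * v i

noncomputable def nsq {d : ℕ} (v : Fin d → ℍ[ℝ]) : ℝ :=
  ∑ i, Quaternion.normSq (v i)

namespace Quaternion

variable {R : Type*} [CommRing R] {ι : Type*}

theorem re_mul_comm (a b : ℍ[R]) : (a * b).re = (b * a).re := by
  simp only [re_mul]
  ring

theorem re_sum (s : Finset ι) (f : ι → ℍ[R]) : (∑ i ∈ s, f i).re = ∑ i ∈ s, (f i).re :=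
  map_sum (QuaternionAlgebra.reₗ _ _ _) f s

theorem coe_sum (s : Finset ι) (f : ι → R) :
    ((∑ i ∈ s, f i : R) : ℍ[R]) = ∑ i ∈ s, (f i : ℍ[R]) :=
  map_sum (algebraMap R ℍ[R]) f s

end Quaternion

namespace Matrix

variable {α : Type*} {R : Type*} [CommRing R] {m n : Type*} [Fintype m] [Fintype n]

theorem mul_pow_mul [Semiring α] [DecidableEq m] [DecidableEq n]
    (A : Matrix m n α) (B : Matrix n m α) (k : ℕ) :
    (A * B) ^ k * A = A * (B * A) ^ k := by
  induction k with
  | zero => simp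
  | succ k ih =>
    rw [pow_succ', pow_succ', Matrix.mul_assoc, ih]
    simp only [Matrix.mul_assoc]

theorem re_trace_mul_comm (A : Matrix m n ℍ[R]) (B : Matrix n m ℍ[R]) :
    (A * B).trace.re = (B * A).trace.re := by
  simp only [trace, diag, mul_apply, Quaternion.re_sum]
  rw [Finset.sum_comm]
  exact Finset.sum_congr rfl fun j _ => Finset.sum_congr rfl fun i _ => re_mul_comm _ _

theorem IsHermitian.trace_eq_re [NoZeroDivisors R] [CharZero R] {A : Matrix n n ℍ[R]}
    (hA : A.IsHermitian) : A.trace = (A.trace.re : ℍ[R]) :=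
  Quaternion.star_eq_self.mp (by rw [← trace_conjTranspose, hA.eq])

theorem IsHermitian.trace_sq [DecidableEq n] {A : Matrix n n ℍ[R]} (hA : A.IsHermitian) :
    (A ^ 2).trace = ((∑ i, ∑ j, normSq (A j i) : R) : ℍ[R]) := by
  simp only [sq, trace, diag, mul_apply, Quaternion.coe_sum]
  refine Finset.sum_congr rfl fun i _ => Finset.sum_congr rfl fun j _ => ?_
  rw [← hA.apply i j, star_mul_self]

theorem trace_pow_mul_conjTranspose_self [NoZeroDivisors R] [CharZero R] [DecidableEq m]
    [DecidableEq n] (V : Matrix m n ℍ[R]) {k : ℕ} (hk : 0 < k) :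
    ((V * Vᴴ) ^ k).trace = ((Vᴴ * V) ^ k).trace := by
  obtain ⟨k, rfl⟩ := Nat.exists_eq_add_one_of_ne_zero hk.ne'
  have hre : ((V * Vᴴ) ^ (k + 1)).trace.re = ((Vᴴ * V) ^ (k + 1)).trace.re :=
    calc ((V * Vᴴ) ^ (k + 1)).trace.re
        = (V * ((Vᴴ * V) ^ k * Vᴴ)).trace.re := by
          rw [pow_succ', Matrix.mul_assoc, mul_pow_mul]
      _ = ((Vᴴ * V) ^ (k + 1)).trace.re := by
          rw [re_trace_mul_comm, Matrix.mul_assoc, ← pow_succ]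
  rw [IsHermitian.trace_eq_re ((isHermitian_mul_conjTranspose_self V).pow _),
    IsHermitian.trace_eq_re ((isHermitian_conjTranspose_mul_self V).pow _), hre]

end Matrix

theorem qip_eq_conjTranspose_mul_apply {d : ℕ} {n : Type*} [Fintype n]
    (V : Matrix (Fin d) n ℍ[ℝ]) (j k : n) :
    qip (fun i => V i j) (fun i => V i k) = (Vᴴ * V) k j := by
  simp only [qip, mul_apply, conjTranspose_apply]

theorem coe_nsq {d : ℕ} (v : Fin d → ℍ[ℝ]) : (nsq v : ℍ[ℝ]) = qip v v := by
  simp only [nsq, qip, star_mul_self, Quaternion.coe_sum]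

/-- For `V ∈ ℍ^{d×n}` with columns `v_j`, frame operator `S = V Vᴴ` and Gramian
`G = Vᴴ V`: `trace (S^k) = trace (G^k)` for all `k ≥ 1`; in particular
`trace S = ∑_j ‖v_j‖²` and `trace (S²) = ∑_j ∑_k |⟨v_j, v_k⟩|²`. -/
theorem trace_frame_operator_eq_trace_gramian (d n : ℕ)
    (V : Matrix (Fin d) (Fin n) ℍ[ℝ]) :
    (∀ k : ℕ, 1 ≤ k → ((V * Vᴴ) ^ k).trace = ((Vᴴ * V) ^ k).trace) ∧
    (V * Vᴴ).trace = ((∑ j, nsq (fun i => V i j) : ℝ) : ℍ[ℝ]) ∧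
    ((V * Vᴴ) ^ 2).trace =
      ((∑ j, ∑ k, Quaternion.normSq (qip (fun i => V i j) (fun i => V i k)) : ℝ) : ℍ[ℝ]) := by
  have hpow : ∀ k : ℕ, 1 ≤ k → ((V * Vᴴ) ^ k).trace = ((Vᴴ * V) ^ k).trace :=
    fun _ hk => trace_pow_mul_conjTranspose_self V hk
  refine ⟨hpow, ?_, ?_⟩
  · rw [← pow_one (V * Vᴴ), hpow 1 le_rfl, pow_one, Quaternion.coe_sum]
    simp only [trace, diag, coe_nsq, qip_eq_conjTranspose_mul_apply]
  · rw [hpow 2 one_le_two, IsHermitian.trace_sq (isHermitian_conjTranspose_mul_self V)]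
    simp only [qip_eq_conjTranspose_mul_apply]
end

section
/- Complementary tight frame of equiangular lines: let v_1, …, v_n ∈ ℍ^d, n > d, be unit vectors with |⟨v_j, v_k⟩|² = λ := (n−d)/(d(n−1)) for all j ≠ k, and suppose V·Vᴴ = (n/d)·I_d where V = [v_1,…,v_n]. Let G := Vᴴ·V and define G_c := (n/(n−d))·I_n − (d/(n−d))·G. Then ((n−d)/n)·G_c is Hermitian and idempotent with Re(trace) = n − d, every diagonal entry of G_c equals 1, and |(G_c)_{jk}|² = d/((n−d)(n−1)) for all j ≠ k; hence G_c is the Gramian of an equiangular tight frame of n unit vectors for ℍ^{n−d} with angle λ_c = d/((n−d)(n−1)). -/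
/-!
Tightness `V Vᴴ = (n/d) I` gives `G² = (n/d) G` for the Gram matrix `G = Vᴴ V`, so `(d/n) G` is
an orthogonal projection and `Q = I - (d/n) G` is the complementary one; its trace is `n - d`
because `G` has unit diagonal. Off the diagonal `G_c` is `-d/(n-d)` times `G`, which rescales the
angle `(n-d)/(d(n-1))` to `d/((n-d)(n-1))`.
-/

open Quaternion Matrix BigOperators

theorem qip_self {d : ℕ} (w : Fin d → ℍ[ℝ]) : qip w w = (nsq w : ℍ[ℝ]) := by
  simp only [qip, nsq, Quaternion.star_mul_self, ← Quaternion.algebraMap_def, map_sum]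

theorem conjTranspose_mul_self_of_columns_apply {m : Type*} [Fintype m] {d : ℕ}
    (v : m → Fin d → ℍ[ℝ]) (j k : m) :
    ((of fun i j => v j i)ᴴ * of fun i j => v j i) j k = qip (v k) (v j) := by
  simp [Matrix.mul_apply, qip]

theorem Matrix.mul_mul_mul_eq_smul_of_mul_eq_smul_one {l m α R : Type*} [Fintype l] [Fintype m]
    [DecidableEq m] [Semiring α] [Monoid R] [DistribMulAction R α] [IsScalarTower R α α]
    [SMulCommClass R α α]
    {A : Matrix l m α} {B : Matrix m l α} {c : R} (h : B * A = c • 1) :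
    A * B * (A * B) = c • (A * B) := by
  rw [Matrix.mul_assoc, ← Matrix.mul_assoc B, h, Matrix.smul_mul, Matrix.one_mul, Matrix.mul_smul]

theorem isIdempotentElem_one_sub_smul {K A : Type*} [Field K] [Ring A] [Algebra K A]
    {t : K} {g : A} (h : g * g = t⁻¹ • g) : IsIdempotentElem (1 - t • g) := by
  rw [IsIdempotentElem, sub_mul, mul_sub, mul_sub, smul_mul_smul_comm, h, smul_smul,
    mul_self_mul_inv]
  simp

instance Quaternion.instStarModule {R : Type*} [CommRing R] [StarRing R] [TrivialStar R] :
    StarModule R ℍ[R] :=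
  ⟨fun r a => by rw [Quaternion.star_smul, star_trivial r]⟩

/-- Complementary tight frame of equiangular lines: if `v_1, …, v_n ∈ ℍ^d`, `n > d`,
are equiangular unit vectors at angle `λ = (n−d)/(d(n−1))` forming a tight frame
(`V Vᴴ = (n/d) I_d`), and `G = Vᴴ V`, `G_c = (n/(n−d)) I_n − (d/(n−d)) G`, then
`((n−d)/n) G_c` is Hermitian idempotent with real trace `n − d`, the diagonal
entries of `G_c` are `1`, and `|(G_c)_{jk}|² = d/((n−d)(n−1))` for `j ≠ k`;
thus `G_c` is the Gramian of an equiangular tight frame of `n` unit vectors for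
`ℍ^{n−d}` with angle `λ_c = d/((n−d)(n−1))`. -/
theorem complementary_tight_frame_equiangular (d n : ℕ) (hdn : d < n)
    (v : Fin n → (Fin d → ℍ[ℝ]))
    (hunit : ∀ j, nsq (v j) = 1)
    (hequi : ∀ j k, j ≠ k →
      Quaternion.normSq (qip (v j) (v k)) = ((n : ℝ) - d) / (d * ((n : ℝ) - 1)))
    (htight : (Matrix.of fun i j => v j i) * (Matrix.of fun i j => v j i)ᴴ =
      ((n : ℝ) / (d : ℝ)) • (1 : Matrix (Fin d) (Fin d) ℍ[ℝ])) :
    let G : Matrix (Fin n) (Fin n) ℍ[ℝ] :=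
      (Matrix.of fun i j => v j i)ᴴ * (Matrix.of fun i j => v j i)
    let Gc : Matrix (Fin n) (Fin n) ℍ[ℝ] :=
      ((n : ℝ) / ((n : ℝ) - d)) • (1 : Matrix (Fin n) (Fin n) ℍ[ℝ]) -
        ((d : ℝ) / ((n : ℝ) - d)) • G
    let Q : Matrix (Fin n) (Fin n) ℍ[ℝ] := (((n : ℝ) - d) / (n : ℝ)) • Gc
    Qᴴ = Q ∧ Q * Q = Q ∧ (Q.trace).re = (n : ℝ) - d ∧
    (∀ j, Gc j j = 1) ∧
    (∀ j k, j ≠ k →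
      Quaternion.normSq (Gc j k) = (d : ℝ) / (((n : ℝ) - d) * ((n : ℝ) - 1))) := by
  intro G Gc Q
  have hn : (n : ℝ) ≠ 0 := Nat.cast_ne_zero.2 (by omega)
  have hnd : (n : ℝ) - d ≠ 0 := sub_ne_zero.2 (by exact_mod_cast hdn.ne')
  have hG_apply (j k : Fin n) : G j k = qip (v k) (v j) :=
    conjTranspose_mul_self_of_columns_apply v j k
  have hG_diag (j : Fin n) : G j j = 1 := by rw [hG_apply, qip_self, hunit, coe_one]
  have hQ : Q = 1 - ((d : ℝ) / n) • G := by
    simp only [Q, Gc]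
    rw [smul_sub, smul_smul, smul_smul, show (n - d) / n * (n / (n - d) : ℝ) = 1 by field_simp,
      show (n - d) / n * (d / (n - d) : ℝ) = d / n by field_simp, one_smul]
  refine ⟨?_, ?_, ?_, fun j => ?_, fun j k hjk => ?_⟩
  · rw [hQ]
    exact isHermitian_one.sub ((isHermitian_conjTranspose_mul_self _).smul (.all _))
  · rw [hQ]
    refine isIdempotentElem_one_sub_smul ?_
    rw [inv_div]
    exact mul_mul_mul_eq_smul_of_mul_eq_smul_one htight
  · have hG_trace : G.trace = n := by simp [trace, hG_diag]
    rw [hQ, trace_sub, trace_smul, trace_one, hG_trace, Fintype.card_fin, re_sub, re_smul,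
      re_natCast, smul_eq_mul, div_mul_cancel₀ _ hn]
  · simp only [Gc, Matrix.sub_apply, Matrix.smul_apply, one_apply_eq, hG_diag]
    rw [← sub_smul, ← sub_div, div_self hnd, one_smul]
  · simp only [Gc, Matrix.sub_apply, Matrix.smul_apply, one_apply_ne hjk, smul_zero, zero_sub,
      normSq_neg, normSq_smul, hG_apply, hequi k j hjk.symm]
    field_simp
end

section
/- Characterisation of complex tight frames that give real tight frames: let V = [v_1,…,v_n] = V₁ + i·V₂ ∈ ℂ^{d×n} (V₁, V₂ real) satisfy V·Vᴴ = A·I_d for some real A > 0, and let V_ℝ ∈ ℝ^{2d×n} be the matrix stacking V₁ on top of V₂. Then V_ℝ·V_ℝᵀ = (A/2)·I_{2d} if and only if ∑_j ∑_k ⟨v_j, v_k⟩² = 0 (sum of the squares of the complex inner products), equivalently ∑_j ∑_k (Re⟨v_j, v_k⟩)² = ∑_j ∑_k (Im⟨v_j, v_k⟩)². -/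
/-!
Write `V = X + iY` and `M = V Vᵀ`. The four blocks of the real Gram matrix `V_ℝ V_ℝᵀ` are
`XXᵀ, XYᵀ, YXᵀ, YYᵀ`, while `Re M = XXᵀ - YYᵀ`, `Im M = XYᵀ + YXᵀ`, and tightness
`V Vᴴ = A I` says `XXᵀ + YYᵀ = A I` and `YXᵀ = XYᵀ`. Hence `V_ℝ V_ℝᵀ = (A/2) I` exactly when
`M = 0`. On the other hand, `∑ⱼ ∑ₖ ⟨vⱼ, vₖ⟩²` is the trace of `Gᵀ G` for the Gram matrix
`G = Vᴴ V`, which by cyclicity equals `tr (M Mᴴ) = ‖M‖²_F`: a nonnegative real that vanishes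
iff `M = 0`. Being real, it vanishes iff its real part `∑ (Re ⟨vⱼ, vₖ⟩)² - ∑ (Im ⟨vⱼ, vₖ⟩)²` does.
-/

open Matrix BigOperators

/-- Euclidean inner product on `ℂ^d`: `⟨v,w⟩ = ∑ i, conj (w i) * v i`
(linear in the first variable). -/
noncomputable def cip {d : ℕ} (v w : Fin d → ℂ) : ℂ :=
  ∑ i, starRingEnd ℂ (w i) * v i

open Complex

namespace Matrix

variable {l m n : Type*}

section ReIm

variable [Fintype m]

lemma re_map_mul (Z : Matrix l m ℂ) (W : Matrix m n ℂ) :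
    (Z * W).map re = Z.map re * W.map re - Z.map im * W.map im := by
  ext i j
  simp [mul_apply, re_sum, Finset.sum_sub_distrib]

lemma im_map_mul (Z : Matrix l m ℂ) (W : Matrix m n ℂ) :
    (Z * W).map im = Z.map re * W.map im + Z.map im * W.map re := by
  ext i j
  simp [mul_apply, im_sum, Finset.sum_add_distrib]

end ReIm

lemma conjTranspose_map_re (Z : Matrix m n ℂ) : Zᴴ.map re = (Z.map re)ᵀ := by
  ext i j
  simp

lemma conjTranspose_map_im (Z : Matrix m n ℂ) : Zᴴ.map im = -(Z.map im)ᵀ := by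
  ext i j
  simp

lemma map_re_and_map_im_eq_zero_iff (Z : Matrix m n ℂ) :
    Z.map re = 0 ∧ Z.map im = 0 ↔ Z = 0 := by
  simp only [← Matrix.ext_iff, map_apply, zero_apply, Complex.ext_iff, zero_re, zero_im,
    ← forall_and]

lemma map_re_ofReal_add_I_smul (X Y : Matrix m n ℝ) :
    (X.map (fun x => (x : ℂ)) + I • Y.map (fun x => (x : ℂ))).map re = X := by
  ext i j
  simp

lemma map_im_ofReal_add_I_smul (X Y : Matrix m n ℝ) :
    (X.map (fun x => (x : ℂ)) + I • Y.map (fun x => (x : ℂ))).map im = Y := by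
  ext i j
  simp

lemma map_re_real_smul_one [DecidableEq m] (A : ℝ) :
    (A • 1 : Matrix m m ℂ).map re = A • 1 := by
  ext i j
  by_cases h : i = j <;> simp [h]

lemma map_im_real_smul_one [DecidableEq m] (A : ℝ) :
    (A • 1 : Matrix m m ℂ).map im = 0 := by
  ext i j
  by_cases h : i = j <;> simp [h]

lemma fromRows_mul_transpose_fromRows [Fintype n] {R : Type*} [CommSemiring R]
    (X : Matrix l n R) (Y : Matrix m n R) :
    fromRows X Y * (fromRows X Y)ᵀ = fromBlocks (X * Xᵀ) (X * Yᵀ) (Y * Xᵀ) (Y * Yᵀ) := by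
  rw [transpose_fromRows, fromRows_mul_fromCols]

lemma fromBlocks_eq_half_smul_one_iff [DecidableEq m] {P Q R S : Matrix m m ℝ} {c : ℝ}
    (hPQ : P + Q = c • 1) (hRS : S = R) :
    fromBlocks P R S Q = (c / 2) • 1 ↔ P - Q = 0 ∧ R + S = 0 := by
  rw [← fromBlocks_one, fromBlocks_smul, smul_zero, fromBlocks_inj, sub_eq_zero, hRS]
  constructor
  · rintro ⟨rfl, rfl, -, rfl⟩
    simp
  · rintro ⟨rfl, hR⟩
    have hR : R = 0 := by simpa [← two_smul ℝ] using hR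
    have hP : P = (c / 2) • 1 := by
      rw [← two_smul ℝ] at hPQ
      rw [← inv_smul_smul₀ (two_ne_zero (α := ℝ)) P, hPQ, smul_smul, inv_mul_eq_div]
    exact ⟨hP, hR, hR, hP⟩

theorem fromRows_re_im_mul_transpose_eq_half_smul_one_iff [Fintype n] [DecidableEq m]
    {V : Matrix m n ℂ} {A : ℝ} (htight : V * Vᴴ = A • 1) :
    fromRows (V.map re) (V.map im) * (fromRows (V.map re) (V.map im))ᵀ = (A / 2) • 1 ↔
      V * Vᵀ = 0 := by
  have hre : V.map re * (V.map re)ᵀ + V.map im * (V.map im)ᵀ = A • 1 := by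
    simpa [re_map_mul, conjTranspose_map_re, conjTranspose_map_im, map_re_real_smul_one] using
      congrArg (map · re) htight
  have him : V.map re * (V.map im)ᵀ = V.map im * (V.map re)ᵀ := by
    simpa [im_map_mul, conjTranspose_map_re, conjTranspose_map_im, map_im_real_smul_one,
      neg_add_eq_zero] using congrArg (map · im) htight
  rw [fromRows_mul_transpose_fromRows, fromBlocks_eq_half_smul_one_iff hre him.symm,
    ← map_re_and_map_im_eq_zero_iff, re_map_mul, im_map_mul, transpose_map, transpose_map]

lemma trace_transpose_mul_self [Fintype m] [Fintype n] {R : Type*} [CommSemiring R]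
    (X : Matrix m n R) : (Xᵀ * X).trace = ∑ j, ∑ k, X k j ^ 2 := by
  simp [trace, mul_apply, sq]

open ComplexOrder in
lemma im_trace_mul_conjTranspose_self [Fintype m] [Fintype n] (M : Matrix m n ℂ) :
    (M * Mᴴ).trace.im = 0 :=
  ((nonneg_iff.mp (posSemidef_self_mul_conjTranspose M).trace_nonneg).2).symm

end Matrix

lemma Complex.re_sum_sum_sq {ι κ : Type*} [Fintype ι] [Fintype κ] (f : ι → κ → ℂ) :
    (∑ j, ∑ k, f j k ^ 2).re = ∑ j, ∑ k, (f j k).re ^ 2 - ∑ j, ∑ k, (f j k).im ^ 2 := by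
  simp only [re_sum, sq, mul_re, ← Finset.sum_sub_distrib]

lemma cip_eq_conjTranspose_mul_apply {d : ℕ} {n : Type*} [Fintype n]
    (V : Matrix (Fin d) n ℂ) (j k : n) :
    cip (fun i => V i j) (fun i => V i k) = (Vᴴ * V) k j := by
  simp [cip, mul_apply]

lemma sum_cip_sq_eq_trace {d : ℕ} {n : Type*} [Fintype n] (V : Matrix (Fin d) n ℂ) :
    ∑ j, ∑ k, cip (fun i => V i j) (fun i => V i k) ^ 2 = (V * Vᵀ * (V * Vᵀ)ᴴ).trace := by
  simp_rw [cip_eq_conjTranspose_mul_apply, ← trace_transpose_mul_self, transpose_mul,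
    conjTranspose_mul, conjTranspose_transpose_eq_transpose_conjTranspose, Matrix.mul_assoc]
  rw [trace_mul_comm V]
  simp only [Matrix.mul_assoc]

open ComplexOrder in
lemma sum_cip_sq_eq_zero_iff {d : ℕ} {n : Type*} [Fintype n] (V : Matrix (Fin d) n ℂ) :
    ∑ j, ∑ k, cip (fun i => V i j) (fun i => V i k) ^ 2 = 0 ↔ V * Vᵀ = 0 := by
  rw [sum_cip_sq_eq_trace, trace_mul_conjTranspose_self_eq_zero_iff]

lemma im_sum_cip_sq {d : ℕ} {n : Type*} [Fintype n] (V : Matrix (Fin d) n ℂ) :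
    (∑ j, ∑ k, cip (fun i => V i j) (fun i => V i k) ^ 2).im = 0 := by
  rw [sum_cip_sq_eq_trace]
  exact im_trace_mul_conjTranspose_self _

theorem complex_tight_frame_gives_real_tight_frame_iff_general (d n : ℕ)
    (V₁ V₂ : Matrix (Fin d) (Fin n) ℝ) (A : ℝ)
    (V : Matrix (Fin d) (Fin n) ℂ)
    (hV : V = V₁.map (fun x => (x : ℂ)) + Complex.I • V₂.map (fun x => (x : ℂ)))
    (htight : V * Vᴴ = A • (1 : Matrix (Fin d) (Fin d) ℂ)) :
    (Matrix.fromRows V₁ V₂ * (Matrix.fromRows V₁ V₂)ᵀ =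
        (A / 2) • (1 : Matrix (Fin d ⊕ Fin d) (Fin d ⊕ Fin d) ℝ) ↔
      ∑ j, ∑ k, (cip (fun i => V i j) (fun i => V i k)) ^ 2 = 0) ∧
    (Matrix.fromRows V₁ V₂ * (Matrix.fromRows V₁ V₂)ᵀ =
        (A / 2) • (1 : Matrix (Fin d ⊕ Fin d) (Fin d ⊕ Fin d) ℝ) ↔
      ∑ j, ∑ k, ((cip (fun i => V i j) (fun i => V i k)).re) ^ 2 =
        ∑ j, ∑ k, ((cip (fun i => V i j) (fun i => V i k)).im) ^ 2) := by
  have hV₁ : V.map re = V₁ := hV ▸ map_re_ofReal_add_I_smul V₁ V₂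
  have hV₂ : V.map im = V₂ := hV ▸ map_im_ofReal_add_I_smul V₁ V₂
  have hreal : Matrix.fromRows V₁ V₂ * (Matrix.fromRows V₁ V₂)ᵀ = (A / 2) • 1 ↔
      ∑ j, ∑ k, (cip (fun i => V i j) (fun i => V i k)) ^ 2 = 0 := by
    rw [← hV₁, ← hV₂, fromRows_re_im_mul_transpose_eq_half_smul_one_iff htight,
      sum_cip_sq_eq_zero_iff]
  refine ⟨hreal, hreal.trans ?_⟩
  simp only [Complex.ext_iff, im_sum_cip_sq, re_sum_sum_sq, zero_re, zero_im, and_true,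
    sub_eq_zero]

/-- Characterisation of complex tight frames that give real tight frames:
if `V = V₁ + i V₂ ∈ ℂ^{d×n}` is a tight frame (`V Vᴴ = A I_d`, `A > 0`) and
`V_ℝ` stacks `V₁` on top of `V₂`, then `V_ℝ V_ℝᵀ = (A/2) I_{2d}` iff
`∑_j ∑_k ⟨v_j,v_k⟩² = 0`, equivalently
`∑_j ∑_k (Re⟨v_j,v_k⟩)² = ∑_j ∑_k (Im⟨v_j,v_k⟩)²`. -/
theorem complex_tight_frame_gives_real_tight_frame_iff (d n : ℕ)
    (V₁ V₂ : Matrix (Fin d) (Fin n) ℝ) (A : ℝ) (hA : 0 < A)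
    (V : Matrix (Fin d) (Fin n) ℂ)
    (hV : V = V₁.map (fun x => (x : ℂ)) + Complex.I • V₂.map (fun x => (x : ℂ)))
    (htight : V * Vᴴ = A • (1 : Matrix (Fin d) (Fin d) ℂ)) :
    (Matrix.fromRows V₁ V₂ * (Matrix.fromRows V₁ V₂)ᵀ =
        (A / 2) • (1 : Matrix (Fin d ⊕ Fin d) (Fin d ⊕ Fin d) ℝ) ↔
      ∑ j, ∑ k, (cip (fun i => V i j) (fun i => V i k)) ^ 2 = 0) ∧
    (Matrix.fromRows V₁ V₂ * (Matrix.fromRows V₁ V₂)ᵀ =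
        (A / 2) • (1 : Matrix (Fin d ⊕ Fin d) (Fin d ⊕ Fin d) ℝ) ↔
      ∑ j, ∑ k, ((cip (fun i => V i j) (fun i => V i k)).re) ^ 2 =
        ∑ j, ∑ k, ((cip (fun i => V i j) (fun i => V i k)).im) ^ 2) :=
  complex_tight_frame_gives_real_tight_frame_iff_general d n V₁ V₂ A V hV htight
end

section
/- Block characterisation of quaternionic frames whose complexification is tight: let V = V₁ + V₂·j ∈ ℍ^{d×n} with V₁, V₂ ∈ ℂ^{d×n} (Cayley–Dickson decomposition of each entry), and let V_ℂ ∈ ℂ^{2d×n} be the matrix obtained by stacking V₁ on top of conj(V₂) (entrywise complex conjugate). Then for a real A > 0, V_ℂ·V_ℂᴴ = (A/2)·I_{2d} if and only if V₁·V₁ᴴ = (A/2)·I_d, V₂·V₂ᴴ = (A/2)·I_d, V₁·V₂ᵀ = 0, and V₂·V₁ᵀ = 0. -/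
/-!
Stacking `V₁` over `W = conj V₂` turns `V_ℂ V_ℂᴴ` into the 2×2 block matrix with blocks
`V₁V₁ᴴ, V₁Wᴴ, WV₁ᴴ, WWᴴ`. Since `Wᴴ = V₂ᵀ`, the off-diagonal blocks are `V₁V₂ᵀ` and
`conj (V₂V₁ᵀ)`, and the lower diagonal block is `conj (V₂V₂ᴴ)`. Entrywise conjugation is
injective and fixes `0` and the real multiples of `I`, so it can be dropped from each block
equation.
-/

open Matrix

namespace Matrix

variable {l m n α : Type*}

theorem fromRows_mul_conjTranspose_fromRows [Fintype n] [Semiring α] [StarRing α]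
    (A : Matrix l n α) (B : Matrix m n α) :
    fromRows A B * (fromRows A B)ᴴ = fromBlocks (A * Aᴴ) (A * Bᴴ) (B * Aᴴ) (B * Bᴴ) := by
  rw [conjTranspose_fromRows_eq_fromCols_conjTranspose, fromRows_mul_fromCols]

section StarRingEnd

variable [CommSemiring α] [StarRing α]

theorem map_starRingEnd_injective :
    Function.Injective fun M : Matrix m n α => M.map (starRingEnd α) :=
  map_injective star_injective

theorem map_starRingEnd_transpose (M : Matrix m n α) : Mᵀ.map (starRingEnd α) = Mᴴ :=
  rfl

theorem map_starRingEnd_conjTranspose (M : Matrix m n α) : Mᴴ.map (starRingEnd α) = Mᵀ := by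
  ext; simp [starRingEnd_apply]

theorem conjTranspose_map_starRingEnd (M : Matrix m n α) : (M.map (starRingEnd α))ᴴ = Mᵀ := by
  ext; simp [starRingEnd_apply]

theorem map_starRingEnd_mul_conjTranspose [Fintype n] (M : Matrix l n α) (N : Matrix m n α) :
    M.map (starRingEnd α) * Nᴴ = (M * Nᵀ).map (starRingEnd α) := by
  rw [Matrix.map_mul, map_starRingEnd_transpose]

theorem map_starRingEnd_mul_transpose [Fintype n] (M : Matrix l n α) (N : Matrix m n α) :
    M.map (starRingEnd α) * Nᵀ = (M * Nᴴ).map (starRingEnd α) := by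
  rw [Matrix.map_mul, map_starRingEnd_conjTranspose]

theorem map_starRingEnd_eq_zero_iff (M : Matrix m n α) : M.map (starRingEnd α) = 0 ↔ M = 0 :=
  map_starRingEnd_injective.eq_iff' (Matrix.map_zero _ (map_zero _))

theorem map_starRingEnd_eq_smul_one_iff [DecidableEq n] {R : Type*} [Star R] [TrivialStar R]
    [SMul R α] [StarModule R α] (M : Matrix n n α) (r : R) :
    M.map (starRingEnd α) = r • 1 ↔ M = r • 1 :=
  map_starRingEnd_injective.eq_iff' <| by
    rw [Matrix.map_smul _ r fun a => by simp [starRingEnd_apply, star_smul],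
      Matrix.map_one _ (map_zero _) (map_one _)]

end StarRingEnd

end Matrix

theorem complexification_tight_iff_blocks_general (d n : ℕ)
    (V₁ V₂ : Matrix (Fin d) (Fin n) ℂ) (A : ℝ) :
    (Matrix.fromRows V₁ (V₂.map (starRingEnd ℂ)) *
        (Matrix.fromRows V₁ (V₂.map (starRingEnd ℂ)))ᴴ =
        (A / 2) • (1 : Matrix (Fin d ⊕ Fin d) (Fin d ⊕ Fin d) ℂ)) ↔
      (V₁ * V₁ᴴ = (A / 2) • (1 : Matrix (Fin d) (Fin d) ℂ) ∧
        V₂ * V₂ᴴ = (A / 2) • (1 : Matrix (Fin d) (Fin d) ℂ) ∧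
        V₁ * V₂ᵀ = 0 ∧ V₂ * V₁ᵀ = 0) := by
  rw [fromRows_mul_conjTranspose_fromRows, conjTranspose_map_starRingEnd,
    map_starRingEnd_mul_conjTranspose, map_starRingEnd_mul_transpose,
    ← fromBlocks_one, fromBlocks_smul, fromBlocks_inj, smul_zero,
    map_starRingEnd_eq_zero_iff, map_starRingEnd_eq_smul_one_iff]
  tauto

/-- Block characterisation of quaternionic frames whose complexification is tight:
for `V = V₁ + V₂·j ∈ ℍ^{d×n}` with Cayley–Dickson components `V₁, V₂ ∈ ℂ^{d×n}`,
and `V_ℂ ∈ ℂ^{2d×n}` stacking `V₁` on top of `conj(V₂)`, one has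
`V_ℂ V_ℂᴴ = (A/2) I_{2d}` iff `V₁ V₁ᴴ = (A/2) I_d`, `V₂ V₂ᴴ = (A/2) I_d`,
`V₁ V₂ᵀ = 0` and `V₂ V₁ᵀ = 0`. -/
theorem complexification_tight_iff_blocks (d n : ℕ)
    (V₁ V₂ : Matrix (Fin d) (Fin n) ℂ) (A : ℝ) (hA : 0 < A) :
    (Matrix.fromRows V₁ (V₂.map (starRingEnd ℂ)) *
        (Matrix.fromRows V₁ (V₂.map (starRingEnd ℂ)))ᴴ =
        (A / 2) • (1 : Matrix (Fin d ⊕ Fin d) (Fin d ⊕ Fin d) ℂ)) ↔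
      (V₁ * V₁ᴴ = (A / 2) • (1 : Matrix (Fin d) (Fin d) ℂ) ∧
        V₂ * V₂ᴴ = (A / 2) • (1 : Matrix (Fin d) (Fin d) ℂ) ∧
        V₁ * V₂ᵀ = 0 ∧ V₂ * V₁ᵀ = 0) :=
  complexification_tight_iff_blocks_general d n V₁ V₂ A
end

section
/- Complex tight frames give quaternionic tight frames: let V = V₁ + V₂·j ∈ ℍ^{d×n} with V₁, V₂ ∈ ℂ^{d×n}, and let V_ℂ ∈ ℂ^{2d×n} be the matrix obtained by stacking V₁ on top of conj(V₂). If V_ℂ·V_ℂᴴ = B·I_{2d} for some real B > 0, then V·Vᴴ = 2B·I_d as quaternionic matrices (the columns of V form a tight frame for ℍ^d). -/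
/-!
Since `j z = conj(z) j` and `j² = -1`, the Gram matrix of `V = V₁ + V₂ j` is
`V Vᴴ = (V₁ V₁ᴴ + V₂ V₂ᴴ) + (V₂ V₁ᵀ - V₁ V₂ᵀ) j`. The four blocks of `V_ℂ V_ℂᴴ` are
`V₁ V₁ᴴ`, `V₁ V₂ᵀ`, `conj (V₂ V₁ᵀ)` and `conj (V₂ V₂ᴴ)`, so tightness of `V_ℂ` with bound `B`
makes the first summand `2B I` and the second one zero.
-/

open Quaternion Matrix BigOperators

/-- The embedding `ℂ → ℍ` sending `x + y i` to the quaternion `x + y i`. -/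
noncomputable def toQ (z : ℂ) : ℍ[ℝ] := ⟨z.re, z.im, 0, 0⟩

/-- The quaternion unit `j`. -/
noncomputable def qj : ℍ[ℝ] := ⟨0, 0, 1, 0⟩

open ComplexConjugate

lemma toQ_eq_coe (z : ℂ) : toQ z = (z : ℍ) := rfl

@[simp] lemma re_qj : qj.re = 0 := rfl
@[simp] lemma imI_qj : qj.imI = 0 := rfl
@[simp] lemma imJ_qj : qj.imJ = 1 := rfl
@[simp] lemma imK_qj : qj.imK = 0 := rfl

lemma coe_add_coe_mul_qj_mul_star (z w z' w' : ℂ) :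
    ((z : ℍ) + w * qj) * star ((z' : ℍ) + w' * qj) =
      ↑(z * conj z' + w * conj w') + ↑(w * z' - z * w') * qj := by
  ext <;> simp <;> ring

section

variable {m n p : Type*}

noncomputable def quaternionMatrix (V₁ V₂ : Matrix m n ℂ) : Matrix m n ℍ[ℝ] :=
  of fun i t => toQ (V₁ i t) + toQ (V₂ i t) * qj

lemma quaternionMatrix_mul_conjTranspose [Fintype n] (V₁ V₂ : Matrix m n ℂ)
    (W₁ W₂ : Matrix p n ℂ) :
    quaternionMatrix V₁ V₂ * (quaternionMatrix W₁ W₂)ᴴ =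
      quaternionMatrix (V₁ * W₁ᴴ + V₂ * W₂ᴴ) (V₂ * W₁ᵀ - V₁ * W₂ᵀ) := by
  ext i k : 1
  simp only [quaternionMatrix, toQ_eq_coe, mul_apply, conjTranspose_apply, transpose_apply,
    of_apply, Matrix.add_apply, Matrix.sub_apply, RCLike.star_def, coe_add_coe_mul_qj_mul_star]
  simp only [← coe_ofComplex, map_add, map_sub, map_sum, Finset.sum_add_distrib,
    Finset.sum_sub_distrib, sub_mul, Finset.sum_mul]

lemma quaternionMatrix_smul_one [DecidableEq m] (c : ℝ) :
    quaternionMatrix (c • 1 : Matrix m m ℂ) 0 = c • 1 := by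
  ext i k : 1
  by_cases h : i = k <;> simp [quaternionMatrix, toQ_eq_coe, h, one_apply]
  exact Algebra.algebraMap_eq_smul_one c

lemma fromRows_map_conj_mul_conjTranspose [Fintype n] (V₁ V₂ : Matrix m n ℂ) :
    fromRows V₁ (V₂.map conj) * (fromRows V₁ (V₂.map conj))ᴴ =
      fromBlocks (V₁ * V₁ᴴ) (V₁ * V₂ᵀ) ((V₂ * V₁ᵀ).map conj) ((V₂ * V₂ᴴ).map conj) := by
  have h_map_conj_conjTranspose : (V₂.map conj)ᴴ = V₂ᵀ := by ext; simp
  have h_conjTranspose_map_conj : V₂ᴴ.map conj = V₂ᵀ := by ext; simp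
  rw [conjTranspose_fromRows_eq_fromCols_conjTranspose, fromRows_mul_fromCols,
    h_map_conj_conjTranspose, Matrix.map_mul, Matrix.map_mul, h_conjTranspose_map_conj]
  rfl

end

theorem complex_tight_frame_gives_quaternionic_tight_frame_general (d n : ℕ)
    (V₁ V₂ : Matrix (Fin d) (Fin n) ℂ) (B : ℝ)
    (htight : Matrix.fromRows V₁ (V₂.map (starRingEnd ℂ)) *
        (Matrix.fromRows V₁ (V₂.map (starRingEnd ℂ)))ᴴ =
        B • (1 : Matrix (Fin d ⊕ Fin d) (Fin d ⊕ Fin d) ℂ)) :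
    (Matrix.of fun i t => toQ (V₁ i t) + toQ (V₂ i t) * qj) *
      (Matrix.of fun i t => toQ (V₁ i t) + toQ (V₂ i t) * qj)ᴴ =
      (2 * B) • (1 : Matrix (Fin d) (Fin d) ℍ[ℝ]) := by
  rw [fromRows_map_conj_mul_conjTranspose, ← fromBlocks_one, fromBlocks_smul, smul_zero,
    fromBlocks_inj] at htight
  obtain ⟨h₁₁, h₁₂, h₂₁, h₂₂⟩ := htight
  have h₂₂' : V₂ * V₂ᴴ = B • 1 := by
    simpa [Function.comp_def, Matrix.map_smul, Matrix.map_one] using congrArg (map · conj) h₂₂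
  have h₂₁' : V₂ * V₁ᵀ = 0 := by simpa [Function.comp_def] using congrArg (map · conj) h₂₁
  change quaternionMatrix V₁ V₂ * (quaternionMatrix V₁ V₂)ᴴ = _
  rw [quaternionMatrix_mul_conjTranspose, h₁₁, h₂₂', h₂₁', h₁₂, sub_zero, ← add_smul,
    ← two_mul, quaternionMatrix_smul_one]

/-- Complex tight frames give quaternionic tight frames: if `V = V₁ + V₂·j ∈ ℍ^{d×n}`
with `V₁, V₂ ∈ ℂ^{d×n}`, and the complexification `V_ℂ ∈ ℂ^{2d×n}` (stacking `V₁` on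
top of `conj(V₂)`) satisfies `V_ℂ V_ℂᴴ = B I_{2d}` with `B > 0`, then
`V Vᴴ = 2B I_d` as quaternionic matrices. -/
theorem complex_tight_frame_gives_quaternionic_tight_frame (d n : ℕ)
    (V₁ V₂ : Matrix (Fin d) (Fin n) ℂ) (B : ℝ) (hB : 0 < B)
    (htight : Matrix.fromRows V₁ (V₂.map (starRingEnd ℂ)) *
        (Matrix.fromRows V₁ (V₂.map (starRingEnd ℂ)))ᴴ =
        B • (1 : Matrix (Fin d ⊕ Fin d) (Fin d ⊕ Fin d) ℂ)) :
    (Matrix.of fun i t => toQ (V₁ i t) + toQ (V₂ i t) * qj) *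
      (Matrix.of fun i t => toQ (V₁ i t) + toQ (V₂ i t) * qj)ᴴ =
      (2 * B) • (1 : Matrix (Fin d) (Fin d) ℍ[ℝ]) :=
  complex_tight_frame_gives_quaternionic_tight_frame_general d n V₁ V₂ B htight
end

section
/- One isoclinicity condition implies the other: let V_j, V_k ∈ ℍ^{d×r} have orthonormal columns (V_jᴴ·V_j = I_r and V_kᴴ·V_k = I_r), and set P_j := V_j·V_jᴴ, P_k := V_k·V_kᴴ (the orthogonal projections onto the corresponding r-dimensional subspaces). Then for any real λ, P_j·P_k·P_j = λ·P_j if and only if P_k·P_j·P_k = λ·P_k. -/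
open Quaternion Matrix BigOperators


lemma trace_ctms {n m : ℕ} (M : Matrix (Fin n) (Fin m) ℍ[ℝ]) :
    Matrix.trace (Mᴴ * M) = ((∑ i, ∑ j, Quaternion.normSq (M i j) : ℝ) : ℍ[ℝ]) := by
  simp only [Matrix.trace, Matrix.diag, Matrix.mul_apply, Matrix.conjTranspose_apply,
    Quaternion.star_mul_self]
  rw [← Quaternion.algebraMap_def, map_sum]
  simp_rw [map_sum]
  exact Finset.sum_comm

lemma key {r : ℕ} (A : Matrix (Fin r) (Fin r) ℍ[ℝ]) (lam : ℝ)
    (h : A * Aᴴ = lam • 1) : Aᴴ * A = lam • 1 := by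
  set B : Matrix (Fin r) (Fin r) ℍ[ℝ] := Aᴴ * A - lam • 1 with hB
  have hsm : (lam • (1 : Matrix (Fin r) (Fin r) ℍ[ℝ]))ᴴ = lam • 1 := by
    refine Matrix.ext fun i j => ?_
    simp only [Matrix.conjTranspose_apply, Matrix.smul_apply, Quaternion.star_smul]
    rw [Matrix.one_apply, Matrix.one_apply]
    split_ifs with h1 h2 h3 <;> simp_all [eq_comm]
  have hBH : Bᴴ = B := by
    rw [hB, Matrix.conjTranspose_sub, Matrix.conjTranspose_mul, hsm,
      Matrix.conjTranspose_conjTranspose]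
  have hB2 : B * B = (-lam) • B := by
    have h4 : Aᴴ * A * (Aᴴ * A) = lam • (Aᴴ * A) := by
      calc Aᴴ * A * (Aᴴ * A) = Aᴴ * (A * Aᴴ) * A := by noncomm_ring
        _ = Aᴴ * (lam • (1 : Matrix (Fin r) (Fin r) ℍ[ℝ])) * A := by rw [h]
        _ = lam • (Aᴴ * A) := by
            rw [Matrix.mul_smul, Matrix.mul_one, Matrix.smul_mul]
    simp only [hB, Matrix.sub_mul, Matrix.mul_sub, Matrix.smul_mul, Matrix.mul_smul,
      Matrix.one_mul, Matrix.mul_one, h4, neg_smul, smul_sub]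
    module
  have htrB : Matrix.trace B = 0 := by
    have t1 := trace_ctms A
    have t2 := trace_ctms Aᴴ
    simp only [Matrix.conjTranspose_conjTranspose, Matrix.conjTranspose_apply,
      Quaternion.normSq_star] at t2
    have h1 : Matrix.trace (Aᴴ * A) = Matrix.trace (A * Aᴴ) := by
      rw [t1, t2, Finset.sum_comm]
    simp [hB, Matrix.trace_sub, h1, h, Matrix.trace_smul]
  have htrBB : Matrix.trace (Bᴴ * B) = 0 := by
    rw [hBH, hB2, Matrix.trace_smul, htrB, smul_zero]
  have hBzero : B = 0 := by
    rw [trace_ctms B] at htrBB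
    have hsum : (∑ i, ∑ j, Quaternion.normSq (B i j) : ℝ) = 0 :=
      Quaternion.coe_injective (by simpa using htrBB)
    refine Matrix.ext fun i j => ?_
    have hi := (Finset.sum_eq_zero_iff_of_nonneg (fun i _ =>
      Finset.sum_nonneg fun j _ => Quaternion.normSq_nonneg)).mp hsum i (Finset.mem_univ i)
    have hj := (Finset.sum_eq_zero_iff_of_nonneg (fun j _ =>
      Quaternion.normSq_nonneg)).mp hi j (Finset.mem_univ j)
    simpa [Quaternion.normSq_eq_zero] using hj
  rwa [hB, sub_eq_zero] at hBzero

lemma sandwich {d r : ℕ} (V : Matrix (Fin d) (Fin r) ℍ[ℝ]) (hV : Vᴴ * V = 1)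
    (M N : Matrix (Fin r) (Fin r) ℍ[ℝ]) :
    V * M * Vᴴ = V * N * Vᴴ ↔ M = N := by
  constructor
  · intro h
    have h2 := congrArg (fun X => Vᴴ * X * V) h
    simpa only [Matrix.mul_assoc, ← Matrix.mul_assoc Vᴴ V, hV, Matrix.one_mul,
      Matrix.mul_one] using h2
  · rintro rfl; rfl

/-- One isoclinicity condition implies the other: if `V_j, V_k ∈ ℍ^{d×r}` have
orthonormal columns and `P_j = V_j V_jᴴ`, `P_k = V_k V_kᴴ` are the corresponding
orthogonal projections, then for any real `λ`,
`P_j P_k P_j = λ P_j ↔ P_k P_j P_k = λ P_k`. -/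
theorem isoclinic_condition_symm (d r : ℕ)
    (Vj Vk : Matrix (Fin d) (Fin r) ℍ[ℝ])
    (hj : Vjᴴ * Vj = 1) (hk : Vkᴴ * Vk = 1) (lam : ℝ) :
    ((Vj * Vjᴴ) * (Vk * Vkᴴ) * (Vj * Vjᴴ) = lam • (Vj * Vjᴴ)) ↔
      ((Vk * Vkᴴ) * (Vj * Vjᴴ) * (Vk * Vkᴴ) = lam • (Vk * Vkᴴ)) := by
  set A : Matrix (Fin r) (Fin r) ℍ[ℝ] := Vjᴴ * Vk with hA
  have hAH : Aᴴ = Vkᴴ * Vj := by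
    rw [hA, Matrix.conjTranspose_mul, Matrix.conjTranspose_conjTranspose]
  have e1 : (Vj * Vjᴴ) * (Vk * Vkᴴ) * (Vj * Vjᴴ) = Vj * (A * Aᴴ) * Vjᴴ := by
    rw [hA, hAH]; simp only [Matrix.mul_assoc]
  have e2 : lam • (Vj * Vjᴴ) = Vj * (lam • (1 : Matrix (Fin r) (Fin r) ℍ[ℝ])) * Vjᴴ := by
    rw [Matrix.mul_smul, Matrix.mul_one, Matrix.smul_mul]
  have e3 : (Vk * Vkᴴ) * (Vj * Vjᴴ) * (Vk * Vkᴴ) = Vk * (Aᴴ * A) * Vkᴴ := by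
    rw [hA, hAH]; simp only [Matrix.mul_assoc]
  have e4 : lam • (Vk * Vkᴴ) = Vk * (lam • (1 : Matrix (Fin r) (Fin r) ℍ[ℝ])) * Vkᴴ := by
    rw [Matrix.mul_smul, Matrix.mul_one, Matrix.smul_mul]
  rw [e1, e2, e3, e4, sandwich Vj hj, sandwich Vk hk]
  constructor
  · exact key A lam
  · intro h
    have := key Aᴴ lam (by rwa [Matrix.conjTranspose_conjTranspose])
    rwa [Matrix.conjTranspose_conjTranspose] at this
end

section
/- Cycle decomposition of m-products: for vectors u_1, …, u_p in ℍ^d define the m-product Δ(u_1, u_2, …, u_p) := ⟨u_2,u_1⟩·⟨u_3,u_2⟩·⟨u_4,u_3⟩⋯⟨u_p,u_{p−1}⟩·⟨u_1,u_p⟩ (an ordered product of quaternions). Then for any v_1,…,v_m, w_1,…,w_n ∈ ℍ^d and 1 ≤ k ≤ m: Δ(v_k, v_{k+1}, …, v_m, v_1, …, v_{k−1}) · Δ(v_k, v_{k−1}, …, v_1, w_1, …, w_n) = (∏_{i=1}^{k−1} |⟨v_i, v_{i+1}⟩|²) · Δ(v_k, v_{k+1}, …, v_m, v_1, w_1, w_2,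 …, w_n). -/
open Quaternion Matrix BigOperators

/-- The `m`-product of a list of vectors `[u_1, …, u_p]` in `ℍ^d`:
`Δ(u_1,…,u_p) = ⟨u_2,u_1⟩·⟨u_3,u_2⟩⋯⟨u_p,u_{p−1}⟩·⟨u_1,u_p⟩`,
an ordered product of quaternions. -/
noncomputable def mprod {d : ℕ} (l : List (Fin d → ℍ[ℝ])) : ℍ[ℝ] :=
  (((l.rotate 1).zip l).map fun p => qip p.1 p.2).prod

namespace MprodAux

variable {d : ℕ}

/-- Product of inner products along the path `a, l₀, l₁, …`. -/
noncomputable def chain : (Fin d → ℍ[ℝ]) → List (Fin d → ℍ[ℝ]) → ℍ[ℝ]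
  | _, [] => 1
  | a, b :: l => qip b a * chain b l

/-- The last vertex of the path `a, l₀, l₁, …`. -/
def lastv : (Fin d → ℍ[ℝ]) → List (Fin d → ℍ[ℝ]) → (Fin d → ℍ[ℝ])
  | a, [] => a
  | _, b :: l => lastv b l

lemma chain_append (a : Fin d → ℍ[ℝ]) (l l' : List (Fin d → ℍ[ℝ])) :
    chain a (l ++ l') = chain a l * chain (lastv a l) l' := by
  induction l generalizing a with
  | nil => simp [chain, lastv]
  | cons b t ih => simp [chain, lastv, ih b, mul_assoc]

lemma lastv_append (a : Fin d → ℍ[ℝ]) (l l' : List (Fin d → ℍ[ℝ])) :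
    lastv a (l ++ l') = lastv (lastv a l) l' := by
  induction l generalizing a with
  | nil => simp [lastv]
  | cons b t ih => simp [lastv, ih]

lemma lastv_concat (a b : Fin d → ℍ[ℝ]) (l : List (Fin d → ℍ[ℝ])) :
    lastv a (l ++ [b]) = b := by
  simp [lastv_append, lastv]

lemma chain_eq (a : Fin d → ℍ[ℝ]) (l : List (Fin d → ℍ[ℝ])) :
    chain a l = ((l.zip (a :: l)).map fun p => qip p.1 p.2).prod := by
  induction l generalizing a with
  | nil => simp [chain]
  | cons b t ih => simp [chain, ih b]

lemma zip_trunc {α β : Type*} :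
    ∀ (l : List α) (x y : List β), l.length ≤ x.length → l.zip (x ++ y) = l.zip x := by
  intro l
  induction l with
  | nil => simp
  | cons a t ih =>
    intro x y h
    cases x with
    | nil => simp at h
    | cons b s => simpa [List.zip] using ih s y (by simpa using h)

lemma mprod_cons (a : Fin d → ℍ[ℝ]) (l : List (Fin d → ℍ[ℝ])) :
    mprod (a :: l) = chain a (l ++ [a]) := by
  rw [chain_eq]
  unfold mprod
  rw [show (a :: l).rotate 1 = l ++ [a] by
    simpa using List.rotate_cons_succ l a 0]
  congr 1
  rw [show a :: (l ++ [a]) = (a :: l) ++ [a] by simp]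
  rw [zip_trunc (l ++ [a]) (a :: l) [a] (by simp)]

lemma star_qip (a b : Fin d → ℍ[ℝ]) : star (qip a b) = qip b a := by
  unfold qip
  rw [star_sum]
  simp [StarMul.star_mul]

/-- Collapsing a forward chain against its reversed chain. -/
lemma scalar_chain : ∀ (j : ℕ) (v : ℕ → Fin d → ℍ[ℝ]),
    chain (v 1) ((List.range j).map fun i => v (i + 2)) *
      chain (v (j + 1)) (((List.range j).map fun i => v (i + 1)).reverse) =
    ((∏ i ∈ Finset.range j, Quaternion.normSq (qip (v (i + 1)) (v (i + 2))) : ℝ) : ℍ[ℝ]) := by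
  intro j
  induction j with
  | zero => intro v; simp [chain]
  | succ j ih =>
    intro v
    have h1 : ((List.range (j + 1)).map fun i => v (i + 2)) =
        v 2 :: ((List.range j).map fun i => v (i + 3)) := by
      rw [List.range_succ_eq_map, List.map_cons, List.map_map]
      rfl
    have h2 : ((List.range (j + 1)).map fun i => v (i + 1)) =
        v 1 :: ((List.range j).map fun i => v (i + 2)) := by
      rw [List.range_succ_eq_map, List.map_cons, List.map_map]
      rfl
    have hlast : lastv (v (j + 2)) (((List.range j).map fun i => v (i + 2)).reverse) = v 2 := by
      cases j with
      | zero => simp [lastv]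
      | succ j' =>
        rw [List.range_succ_eq_map]
        simp only [List.map_cons, List.reverse_cons, List.map_map]
        rw [lastv_concat]
    rw [h1, h2, List.reverse_cons, chain_append, hlast]
    simp only [chain, mul_one]
    have key : chain (v 2) ((List.range j).map fun i => v (i + 3)) *
        chain (v (j + 2)) (((List.range j).map fun i => v (i + 2)).reverse) =
        ((∏ i ∈ Finset.range j,
            Quaternion.normSq (qip (v (i + 2)) (v (i + 3))) : ℝ) : ℍ[ℝ]) :=
      ih (fun i => v (i + 1))
    calc qip (v 2) (v 1) * chain (v 2) ((List.range j).map fun i => v (i + 3)) *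
          (chain (v (j + 2)) (((List.range j).map fun i => v (i + 2)).reverse) * qip (v 1) (v 2))
        = qip (v 2) (v 1) *
            ((chain (v 2) ((List.range j).map fun i => v (i + 3)) *
              chain (v (j + 2)) (((List.range j).map fun i => v (i + 2)).reverse)) *
            qip (v 1) (v 2)) := by noncomm_ring
      _ = qip (v 2) (v 1) *
            (((∏ i ∈ Finset.range j,
                Quaternion.normSq (qip (v (i + 2)) (v (i + 3))) : ℝ) : ℍ[ℝ]) *
            qip (v 1) (v 2)) := by rw [key]
      _ = ((∏ i ∈ Finset.range j,
              Quaternion.normSq (qip (v (i + 2)) (v (i + 3))) : ℝ) : ℍ[ℝ]) *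
            (qip (v 2) (v 1) * qip (v 1) (v 2)) := by
            exact (Quaternion.coe_commute _ (qip (v 2) (v 1))).symm.left_comm _
      _ = ((∏ i ∈ Finset.range j,
              Quaternion.normSq (qip (v (i + 2)) (v (i + 3))) : ℝ) : ℍ[ℝ]) *
            ((Quaternion.normSq (qip (v 1) (v 2)) : ℝ) : ℍ[ℝ]) := by
            rw [show qip (v 1) (v 2) = star (qip (v 2) (v 1)) from (star_qip _ _).symm,
              Quaternion.self_mul_star, Quaternion.normSq_star]
      _ = _ := by
            rw [← Quaternion.coe_mul, Finset.prod_range_succ']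

end MprodAux

open MprodAux

/-- Cycle decomposition of `m`-products: for vectors `v_1,…,v_m`, `w_1,…,w_n` in
`ℍ^d` and `1 ≤ k ≤ m`,
`Δ(v_k,…,v_m,v_1,…,v_{k−1}) · Δ(v_k,v_{k−1},…,v_1,w_1,…,w_n)
  = (∏_{i=1}^{k−1} |⟨v_i,v_{i+1}⟩|²) · Δ(v_k,…,v_m,v_1,w_1,…,w_n)`. -/
theorem mprod_cycle_decomposition (d m n k : ℕ)
    (hk1 : 1 ≤ k) (hkm : k ≤ m) (hn : 1 ≤ n)
    (v w : ℕ → (Fin d → ℍ[ℝ])) :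
    mprod (((List.range m).map fun i => v (i + 1)).rotate (k - 1)) *
      mprod ((((List.range k).map fun i => v (i + 1)).reverse) ++
        ((List.range n).map fun i => w (i + 1))) =
    ((∏ i ∈ Finset.range (k - 1),
        Quaternion.normSq (qip (v (i + 1)) (v (i + 2))) : ℝ) : ℍ[ℝ]) *
      mprod ((((List.range m).map fun i => v (i + 1)).drop (k - 1)) ++
        [v 1] ++ ((List.range n).map fun i => w (i + 1))) := by
  obtain ⟨j, rfl⟩ : ∃ j, k = j + 1 := ⟨k - 1, by omega⟩
  obtain ⟨r, rfl⟩ : ∃ r, m = j + 1 + r := ⟨m - (j + 1), by omega⟩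
  clear hk1 hkm hn
  simp only [Nat.add_sub_cancel]
  set P : List (Fin d → ℍ[ℝ]) := (List.range j).map fun i => v (i + 1) with hP
  set S : List (Fin d → ℍ[ℝ]) := (List.range r).map fun i => v (i + j + 2) with hS
  set W : List (Fin d → ℍ[ℝ]) := (List.range n).map fun i => w (i + 1) with hW
  set T : List (Fin d → ℍ[ℝ]) := (List.range j).map fun i => v (i + 2) with hT
  have hPlen : P.length = j := by simp [hP]
  have hV : ((List.range (j + 1 + r)).map fun i => v (i + 1)) = P ++ v (j + 1) :: S := by
    rw [show j + 1 + r = j + (r + 1) by omega, List.range_add, List.range_succ_eq_map]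
    rw [List.map_append, List.map_map, List.map_cons, List.map_map]
    rw [show ((fun i => v (i + 1)) ∘ fun x => j + x) = fun i => v (j + i + 1) by
      funext i; exact congrArg v (by omega : (j + i) + 1 = j + i + 1)]
    rw [show (fun i => v (j + i + 1)) ∘ Nat.succ = fun i => v (i + j + 2) by
      funext i; exact congrArg v (by omega : j + Nat.succ i + 1 = i + j + 2)]
  have hK2 : ((List.range (j + 1)).map fun i => v (i + 1)) = P ++ [v (j + 1)] := by
    rw [List.range_succ]
    simp [hP]
  have hPT : P ++ [v (j + 1)] = v 1 :: T := by
    rw [← hK2, List.range_succ_eq_map, List.map_cons, List.map_map]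
    rw [show ((fun i => v (i + 1)) ∘ Nat.succ) = fun i => v (i + 2) by
      funext i; exact congrArg v (by omega : Nat.succ i + 1 = i + 2)]
  have hlastS : lastv (v (j + 1)) S = v (j + 1 + r) := by
    cases r with
    | zero => rw [hS]; simp [lastv]
    | succ r' =>
      rw [hS, List.range_succ]
      rw [List.map_append, List.map_cons, List.map_nil, lastv_concat]
      exact congrArg v (by omega)
  have hlastP : lastv (v (j + 1)) P.reverse = v 1 := by
    cases j with
    | zero => simp [hP, lastv]
    | succ j' =>
      rw [hP, List.range_succ_eq_map]
      rw [List.map_cons, List.reverse_cons, lastv_concat]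
  -- first factor
  have e1 : mprod (((List.range (j + 1 + r)).map fun i => v (i + 1)).rotate j) =
      chain (v (j + 1)) S *
        (qip (v 1) (v (j + 1 + r)) * chain (v 1) T) := by
    rw [hV, List.rotate_eq_drop_append_take
      (by rw [List.length_append, List.length_cons, hPlen]; omega), List.drop_left' hPlen,
      List.take_left' hPlen]
    rw [show (v (j + 1) :: S) ++ P = v (j + 1) :: (S ++ P) from rfl, mprod_cons,
      List.append_assoc, chain_append, hlastS, hPT]
    simp [chain]
  -- second factor
  have e2 : mprod ((((List.range (j + 1)).map fun i => v (i + 1)).reverse) ++ W) =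
      chain (v (j + 1)) P.reverse * chain (v 1) (W ++ [v (j + 1)]) := by
    rw [hK2, List.reverse_append, List.reverse_singleton]
    rw [show [v (j + 1)] ++ P.reverse ++ W = v (j + 1) :: (P.reverse ++ W) from rfl,
      mprod_cons, List.append_assoc, chain_append, hlastP]
  -- right-hand side
  have e3 : mprod ((((List.range (j + 1 + r)).map fun i => v (i + 1)).drop j) ++
        [v 1] ++ W) =
      chain (v (j + 1)) S *
        (qip (v 1) (v (j + 1 + r)) * chain (v 1) (W ++ [v (j + 1)])) := by
    rw [hV, List.drop_left' hPlen]
    rw [show (v (j + 1) :: S) ++ [v 1] ++ W = v (j + 1) :: (S ++ (v 1 :: W)) by simp,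
      mprod_cons, List.append_assoc, chain_append, hlastS]
    simp [chain]
  rw [e1, e2, e3]
  have hXY : chain (v 1) T * chain (v (j + 1)) P.reverse =
      ((∏ i ∈ Finset.range j,
          Quaternion.normSq (qip (v (i + 1)) (v (i + 2))) : ℝ) : ℍ[ℝ]) :=
    scalar_chain j v
  set A := chain (v (j + 1)) S
  set q := qip (v 1) (v (j + 1 + r))
  set X := chain (v 1) T
  set Y := chain (v (j + 1)) P.reverse
  set D := chain (v 1) (W ++ [v (j + 1)])
  set c := ((∏ i ∈ Finset.range j,
      Quaternion.normSq (qip (v (i + 1)) (v (i + 2))) : ℝ) : ℍ[ℝ]) with hc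
  have comm : A * q * c = c * (A * q) := ((Quaternion.coe_commute _ (A * q)).eq).symm
  calc A * (q * X) * (Y * D) = A * q * (X * Y) * D := by noncomm_ring
    _ = A * q * c * D := by rw [hXY]
    _ = c * (A * q) * D := by rw [comm]
    _ = c * (A * (q * D)) := by noncomm_ring
end

section
/- m-products are projective unitary invariants up to conjugation: for vectors u_1, …, u_m in ℍ^d define Δ(u_1, …, u_m) := ⟨u_2,u_1⟩·⟨u_3,u_2⟩⋯⟨u_1,u_m⟩ (an ordered product of quaternions). If U ∈ ℍ^{d×d} is unitary (Uᴴ·U = I_d) and α_1, …, α_m ∈ ℍ are unit quaternions (|α_s| = 1), then Δ((U·u_1)·α_1, (U·u_2)·α_2, …, (U·u_m)·α_m) = conj(α_1) · Δ(u_1, u_2, …, u_m) · α_1. -/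
open Quaternion Matrix BigOperators

/-!
Unitarity of `U` gives `⟨U v, U w⟩ = ⟨v, w⟩`, and scalars leave the inner product as
`⟨v α, w β⟩ = conj β ⟨v, w⟩ α`. The `s`-th factor of the transformed `m`-product is therefore
`conj α_s ⟨u_{s+1}, u_s⟩ α_{s+1}`; since `α_s conj α_s = 1`, these conjugating factors cancel
between neighbours and, the product being cyclic, only `conj α_1 ⋯ α_1` survives.
-/

section Telescope

variable {M : Type*} [Monoid M]

theorem List.mul_prod_ofFn_mul_mul_telescope (a b q : ℕ → M) (hab : ∀ s, a s * b s = 1)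
    (n : ℕ) :
    a 0 * (List.ofFn fun s : Fin n => b s * q s * a (s + 1)).prod =
      (List.ofFn fun s : Fin n => q s).prod * a n := by
  induction n with
  | zero => simp
  | succ n ih =>
    simp only [List.ofFn_succ', List.concat_eq_append, List.prod_append, List.prod_singleton,
      Fin.val_castSucc, Fin.val_last, ← mul_assoc, ih]
    simp only [mul_assoc, hab, one_mul]

open Fin.NatCast in
theorem List.mul_prod_ofFn_mul_mul_cyclic {n : ℕ} (a b q : Fin (n + 1) → M)
    (hab : ∀ s, a s * b s = 1) :
    a 0 * (List.ofFn fun s => b s * q s * a (s + 1)).prod = (List.ofFn q).prod * a 0 := by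
  have h := List.mul_prod_ofFn_mul_mul_telescope (fun k => a k) (fun k => b k) (fun k => q k)
    (fun k => hab k) (n + 1)
  simpa [Fin.cast_val_eq_self] using h

end Telescope

theorem qip_eq_star_dotProduct {d : ℕ} (v w : Fin d → ℍ[ℝ]) : qip v w = star w ⬝ᵥ v := rfl

theorem qip_mulVec_mulVec {d : ℕ} {U : Matrix (Fin d) (Fin d) ℍ[ℝ]} (hU : Uᴴ * U = 1)
    (v w : Fin d → ℍ[ℝ]) : qip (U *ᵥ v) (U *ᵥ w) = qip v w := by
  rw [qip_eq_star_dotProduct, qip_eq_star_dotProduct, star_mulVec, dotProduct_mulVec,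
    vecMul_vecMul, hU, vecMul_one]

theorem qip_mul_right_mul_right {d : ℕ} (v w : Fin d → ℍ[ℝ]) (a b : ℍ[ℝ]) :
    qip (fun i => v i * a) (fun i => w i * b) = star b * qip v w * a := by
  simp only [qip, Finset.mul_sum, Finset.sum_mul, star_mul, mul_assoc]

theorem List.zip_rotate_one_ofFn {X : Type*} {n : ℕ} (v : Fin (n + 1) → X) :
    ((List.ofFn v).rotate 1).zip (List.ofFn v) = List.ofFn fun s => (v (s + 1), v s) := by
  apply List.ext_getElem (by simp)
  intro i h _
  simp only [List.getElem_zip, List.getElem_rotate, List.getElem_ofFn, List.length_ofFn]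
  congr 3
  exact (Nat.add_mod_mod _ _ _).symm

theorem mprod_ofFn {d n : ℕ} (v : Fin (n + 1) → (Fin d → ℍ[ℝ])) :
    mprod (List.ofFn v) = (List.ofFn fun s => qip (v (s + 1)) (v s)).prod := by
  rw [mprod, List.zip_rotate_one_ofFn, List.map_ofFn]
  rfl

/-- `m`-products are projective unitary invariants up to conjugation: if `U` is a
unitary quaternionic matrix and `α_1, …, α_m` are unit quaternions, then
`Δ((U u_1) α_1, …, (U u_m) α_m) = conj(α_1) · Δ(u_1,…,u_m) · α_1`. -/
theorem mprod_projective_unitary_invariant (d m : ℕ)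
    (u : Fin (m + 1) → (Fin d → ℍ[ℝ]))
    (U : Matrix (Fin d) (Fin d) ℍ[ℝ]) (hU : Uᴴ * U = 1)
    (α : Fin (m + 1) → ℍ[ℝ]) (hα : ∀ s, Quaternion.normSq (α s) = 1) :
    mprod (List.ofFn fun s => fun i => (U.mulVec (u s)) i * α s) =
      star (α 0) * mprod (List.ofFn u) * α 0 := by
  have hα_star : ∀ s, α s * star (α s) = 1 := fun s => by rw [self_mul_star, hα, coe_one]
  have hα0 : star (α 0) * α 0 = 1 := by rw [star_mul_self, hα, coe_one]
  simp only [mprod_ofFn, qip_mul_right_mul_right, qip_mulVec_mulVec hU]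
  rw [mul_assoc (star _), ← List.mul_prod_ofFn_mul_mul_cyclic α (fun s => star (α s)) _ hα_star,
    ← mul_assoc, hα0, one_mul]
end
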